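/- Let P be an n×n orthogonal projection and X Hermitian with X = XP + PX. Then |XP − PX|² = |XP + PX|² = |X|², and consequently XP − PX and X have the same singular values (hence the same value under any unitarily invariant norm). -/

import Mathlib

/-!
If `P² = P` and `X = XP + PX`, then `PXP = 0`, and expanding both products with this gives
`(PX - XP)(XP - PX) = PX²P + XPX = (XP + PX)² = X²`. For Hermitian `P` and `X` the left side is
`(XP - PX)ᴴ(XP - PX)`, so `XP - PX`, `XP + PX` and `X` share `Aᴴ A = |A|²`, and singular values
only depend on `Aᴴ A`.
-/

open Matrix
open scoped ComplexOrder

noncomputable section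

/-- The positive semidefinite square root, as defined in the older Mathlib
(`Matrix.PosSemidef.sqrt`, removed since). -/
noncomputable def Matrix.PosSemidef.sqrt {m : Type*} [Fintype m] [DecidableEq m] {𝕜 : Type*}
    [RCLike 𝕜] {A : Matrix m m 𝕜} (hA : A.PosSemidef) : Matrix m m 𝕜 :=
  hA.1.eigenvectorUnitary.1 * diagonal ((↑) ∘ (√·) ∘ hA.1.eigenvalues) *
    (star hA.1.eigenvectorUnitary : Matrix m m 𝕜)

theorem Matrix.PosSemidef.posSemidef_sqrt {m : Type*} [Fintype m] [DecidableEq m] {𝕜 : Type*}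
    [RCLike 𝕜] {A : Matrix m m 𝕜} (hA : A.PosSemidef) : PosSemidef hA.sqrt := by
  unfold Matrix.PosSemidef.sqrt
  have hd : PosSemidef (diagonal (((↑) ∘ (√·) ∘ hA.1.eigenvalues) : m → 𝕜)) := by
    refine PosSemidef.diagonal fun i => ?_
    simp only [Function.comp_apply, Pi.zero_apply]
    exact_mod_cast Real.sqrt_nonneg _
  have := hd.mul_mul_conjTranspose_same (hA.1.eigenvectorUnitary.1)
  simpa [Matrix.star_eq_conjTranspose] using this

/-- n×n complex matrices -/
abbrev Mat (n : ℕ) := Matrix (Fin n) (Fin n) ℂ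

/-- modulus |A| = sqrt (Aᴴ A) -/
noncomputable def matAbs {n : ℕ} (A : Mat n) : Mat n :=
  (Matrix.posSemidef_conjTranspose_mul_self A).sqrt

/-- spectral (operator) norm -/
noncomputable def specNorm {n : ℕ} (A : Mat n) : ℝ :=
  ‖Matrix.toEuclideanCLM (𝕜 := ℂ) (n := Fin n) A‖

/-- Löwner order: `A ≤ B` iff `B - A` is positive semidefinite -/
def loewnerLE {n : ℕ} (A B : Mat n) : Prop := (B - A).PosSemidef

/-- singular values of `A`, arranged in non-increasing order -/
noncomputable def sval {n : ℕ} (A : Mat n) : Fin n → ℝ :=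
  fun i =>
    let e := ((Matrix.posSemidef_conjTranspose_mul_self A).posSemidef_sqrt).1.eigenvalues
    (e ∘ Tuple.sort e) i.rev

/-- singular values indexed by naturals (0 beyond the size) -/
noncomputable def svalNat {n : ℕ} (A : Mat n) (k : ℕ) : ℝ :=
  if h : k < n then sval A ⟨k, h⟩ else 0

/-- eigenvalues of a Hermitian matrix, arranged in non-increasing order -/
noncomputable def eigsDesc {n : ℕ} {A : Mat n} (hA : A.IsHermitian) : Fin n → ℝ :=
  fun i => (hA.eigenvalues ∘ Tuple.sort hA.eigenvalues) i.rev

theorem Matrix.PosSemidef.sqrt_sq {m : Type*} [Fintype m] [DecidableEq m] {𝕜 : Type*}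
    [RCLike 𝕜] {A : Matrix m m 𝕜} (hA : A.PosSemidef) : hA.sqrt ^ 2 = A := by
  have hsqrt : hA.sqrt = Unitary.conjStarAlgAut 𝕜 _ hA.1.eigenvectorUnitary
      (diagonal ((↑) ∘ (√·) ∘ hA.1.eigenvalues)) := rfl
  conv_rhs => rw [hA.1.spectral_theorem]
  rw [hsqrt, ← map_pow, diagonal_pow]
  congr 2
  funext i
  simp [← RCLike.ofReal_pow, Real.sq_sqrt (hA.eigenvalues_nonneg i)]

lemma matAbs_sq {n : ℕ} (A : Mat n) : matAbs A ^ 2 = Aᴴ * A :=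
  (posSemidef_conjTranspose_mul_self A).sqrt_sq

lemma sval_eq_of_conjTranspose_mul_self_eq {n : ℕ} {A B : Mat n} (h : Aᴴ * A = Bᴴ * B) :
    sval A = sval B := by
  -- `Aᴴ * A` occurs in `sval A` only inside a proof term, so it cannot be rewritten directly.
  have eigenvalues_sqrt_congr : ∀ {M N : Mat n} (hM : M.PosSemidef) (hN : N.PosSemidef),
      M = N → hM.posSemidef_sqrt.1.eigenvalues = hN.posSemidef_sqrt.1.eigenvalues := by
    rintro M _ hM hN rfl
    rfl
  unfold sval
  rw [eigenvalues_sqrt_congr _ _ h]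

theorem mul_mul_eq_zero_of_eq_mul_add_mul {R : Type*} [Ring R] {P X : R} (hP : P * P = P)
    (hX : X = X * P + P * X) : P * X * P = 0 := by
  have h : X * P = X * P + P * X * P := by
    conv_lhs => rw [hX]
    rw [add_mul, mul_assoc X, hP]
  simpa using h

theorem sub_mul_sub_eq_mul_self_of_eq_mul_add_mul {R : Type*} [Ring R] {P X : R}
    (hP : P * P = P) (hX : X = X * P + P * X) :
    (P * X - X * P) * (X * P - P * X) = X * X := by
  have hPXP : P * (X * P) = 0 := by rw [← mul_assoc, mul_mul_eq_zero_of_eq_mul_add_mul hP hX]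
  have hPXPY (Y : R) : P * (X * (P * Y)) = 0 := by rw [← mul_assoc X, ← mul_assoc, hPXP, zero_mul]
  have hPP (Y : R) : P * (P * Y) = P * Y := by rw [← mul_assoc, hP]
  calc (P * X - X * P) * (X * P - P * X) = (X * P + P * X) * (X * P + P * X) := by
        simp only [sub_mul, mul_sub, add_mul, mul_add, mul_assoc, hPXP, hPXPY, hPP, mul_zero]
        abel
    _ = X * X := by rw [← hX]

theorem IsSelfAdjoint.star_mul_self_sub_eq_of_eq_mul_add_mul {R : Type*} [Ring R] [StarRing R]
    {P X : R} (hPs : IsSelfAdjoint P) (hXs : IsSelfAdjoint X) (hP : P * P = P)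
    (hX : X = X * P + P * X) : star (X * P - P * X) * (X * P - P * X) = star X * X := by
  rw [star_sub, star_mul, star_mul, hPs.star_eq, hXs.star_eq]
  exact sub_mul_sub_eq_mul_self_of_eq_mul_add_mul hP hX

theorem stmt14 {n : ℕ} (P X : Mat n) (hP : P.IsHermitian) (hP2 : P * P = P)
    (hX : X.IsHermitian) (hcod : X = X * P + P * X) :
    matAbs (X * P - P * X) ^ 2 = matAbs (X * P + P * X) ^ 2 ∧
    matAbs (X * P + P * X) ^ 2 = matAbs X ^ 2 ∧
    sval (X * P - P * X) = sval X := by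
  have hcomm : (X * P - P * X)ᴴ * (X * P - P * X) = Xᴴ * X :=
    hP.isSelfAdjoint.star_mul_self_sub_eq_of_eq_mul_add_mul hX.isSelfAdjoint hP2 hcod
  refine ⟨?_, ?_, sval_eq_of_conjTranspose_mul_self_eq hcomm⟩
  · rw [matAbs_sq, matAbs_sq, hcomm, ← hcod]
  · rw [← hcod]

end
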